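/- arXiv:2602.07647 — 4 statements merged into one kernel-verified Lean document; each statement's English description precedes it below -/
import Mathlib

section
/- Let $(Y_n)$ be a bounded sequence of non-negative real numbers, $b > 1$, $C > 0$, $\eta \in (0,1)$, such that $Y_n \le C b^n Y_{n+1}^{1-\eta}$ for all $n \in \mathbb{N}$. Then $Y_0 \le (2C b^{(1-\eta)/\eta})^{1/\eta}$. -/
/-- Interpolation iteration lemma. -/
theorem interpolation_lemma (Y : ℕ → ℝ) (b C η : ℝ)
    (hY : ∀ n, 0 ≤ Y n) (hbdd : ∃ M : ℝ, ∀ n, Y n ≤ M)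
    (hb : 1 < b) (hC : 0 < C) (hη : η ∈ Set.Ioo (0 : ℝ) 1)
    (hrec : ∀ n : ℕ, Y n ≤ C * b ^ n * Y (n + 1) ^ (1 - η)) :
    Y 0 ≤ (2 * C * b ^ ((1 - η) / η)) ^ (1 / η) := by
  obtain ⟨hη0, hη1⟩ := hη
  obtain ⟨M, hM⟩ := hbdd
  have hb0 : (0:ℝ) < b := lt_trans one_pos hb
  have hηne : η ≠ 0 := ne_of_gt hη0
  have h1η : 0 < 1 - η := by linarith
  set K : ℝ := (C * b ^ ((1 - η) / η)) ^ (1 / η) with hKdef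
  have hCb : 0 < C * b ^ ((1 - η) / η) := mul_pos hC (Real.rpow_pos_of_pos hb0 _)
  have hK : 0 < K := Real.rpow_pos_of_pos hCb _
  have hKη : K ^ η = C * b ^ ((1 - η) / η) := by
    rw [hKdef, ← Real.rpow_mul hCb.le, one_div_mul_cancel hηne, Real.rpow_one]
  set g : ℕ → ℝ := fun n => K * b ^ ((n : ℝ) / η) with hg
  have hgpos : ∀ n, 0 < g n := fun n => mul_pos hK (Real.rpow_pos_of_pos hb0 _)
  set Z : ℕ → ℝ := fun n => Y n / g n with hZdef
  have hZ0 : ∀ n, 0 ≤ Z n := fun n => div_nonneg (hY n) (hgpos n).le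
  have key : ∀ k, Z k ≤ Z (k + 1) ^ (1 - η) := by
    intro k
    have hconst : C * b ^ k * g (k + 1) ^ (1 - η) = g k := by
      have hgk1 : g (k + 1) ^ (1 - η)
          = K ^ (1 - η) * b ^ ((((k : ℝ) + 1) / η) * (1 - η)) := by
        rw [hg]
        simp only
        rw [Real.mul_rpow hK.le (Real.rpow_pos_of_pos hb0 _).le,
          ← Real.rpow_mul hb0.le]
        push_cast
        ring_nf
      have hKsplit : K = K ^ η * K ^ (1 - η) := by
        rw [← Real.rpow_add hK]
        norm_num
      rw [hgk1, hg]
      simp only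
      conv_rhs => rw [hKsplit, hKη]
      rw [← Real.rpow_natCast b k]
      have hbb : b ^ ((k : ℝ)) * b ^ (((k : ℝ) + 1) / η * (1 - η))
          = b ^ ((1 - η) / η) * b ^ ((k : ℝ) / η) := by
        rw [← Real.rpow_add hb0, ← Real.rpow_add hb0]
        congr 1
        field_simp
        ring
      linear_combination C * K ^ (1 - η) * hbb
    have h1 : Z k ≤ (C * b ^ k * Y (k + 1) ^ (1 - η)) / g k :=
      (div_le_div_iff_of_pos_right (hgpos k)).mpr (hrec k)
    refine h1.trans_eq ?_
    have hZk1 : Z (k + 1) ^ (1 - η) = Y (k + 1) ^ (1 - η) / g (k + 1) ^ (1 - η) := by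
      rw [hZdef]
      exact Real.div_rpow (hY _) (hgpos _).le _
    rw [hZk1, ← hconst]
    rw [mul_div_mul_left _ _ (by positivity : (C * b ^ k : ℝ) ≠ 0)]
  have iter : ∀ n, Z 0 ≤ Z n ^ ((1 - η) ^ n : ℝ) := by
    intro n
    induction n with
    | zero => simp
    | succ n ih =>
      have h2 : Z n ^ ((1 - η) ^ n : ℝ) ≤ (Z (n + 1) ^ (1 - η)) ^ ((1 - η) ^ n : ℝ) :=
        Real.rpow_le_rpow (hZ0 n) (key n) (by positivity)
      have h3 : (Z (n + 1) ^ (1 - η)) ^ ((1 - η) ^ n : ℝ)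
          = Z (n + 1) ^ ((1 - η) ^ (n + 1) : ℝ) := by
        rw [← Real.rpow_mul (hZ0 (n + 1))]
        congr 1
        rw [pow_succ']
      exact ih.trans (h2.trans_eq h3)
  -- choose n with Z n ≤ 1
  have hb1 : 1 < b ^ (1 / η) := Real.one_lt_rpow_iff_of_pos hb0 |>.mpr (Or.inl ⟨hb, by positivity⟩)
  obtain ⟨n, hn⟩ := pow_unbounded_of_one_lt (M / K) hb1
  have hgn : M ≤ g n := by
    have : b ^ ((n : ℝ) / η) = (b ^ (1 / η)) ^ n := by
      rw [← Real.rpow_natCast (b ^ (1 / η)) n, ← Real.rpow_mul hb0.le]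
      congr 1
      ring
    rw [hg]
    simp only
    rw [this]
    calc M = K * (M / K) := by field_simp
    _ ≤ K * (b ^ (1 / η)) ^ n := by
        have := hn.le
        nlinarith [hK]
  have hZn : Z n ≤ 1 := by
    rw [hZdef]
    simp only
    rw [div_le_one (hgpos n)]
    exact (hM n).trans hgn
  have hZ01 : Z 0 ≤ 1 :=
    (iter n).trans (Real.rpow_le_one (hZ0 n) hZn (by positivity))
  have hY0K : Y 0 ≤ K := by
    have hg0 : g 0 = K := by
      rw [hg]
      simp
    have := (div_le_one (hgpos 0)).mp hZ01
    rwa [hg0] at this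
  refine hY0K.trans ?_
  rw [hKdef]
  apply Real.rpow_le_rpow hCb.le _ (by positivity)
  nlinarith [Real.rpow_pos_of_pos hb0 ((1 - η) / η)]
end

section
/- For every $p \in (1,2)$ and every $q > 1$ there exists a constant $\gamma > 0$ (depending only on $p$ and $q$) such that for all $a, b \ge 0$: $\big| a^{(p+q-2)/p} - b^{(p+q-2)/p} \big|^p \le \gamma \, |a-b|^{p-2}(a-b)(a^{q-1} - b^{q-1})$. -/
open Real

/-- For `0 < s` and `t ∈ [0,1]`, `1 - t^s ≤ max 1 s * (1 - t)`. -/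
lemma alg_bern_upper {s t : ℝ} (hs : 0 < s) (ht0 : 0 ≤ t) (ht1 : t ≤ 1) :
    1 - t ^ s ≤ max 1 s * (1 - t) := by
  rcases le_total 1 s with h | h
  · rw [max_eq_right h]
    have hb := one_add_mul_self_le_rpow_one_add (by linarith : (-1:ℝ) ≤ t - 1) h
    have e : 1 + (t - 1) = t := by ring
    rw [e] at hb
    nlinarith
  · rw [max_eq_left h]
    rcases eq_or_lt_of_le ht0 with rfl | ht0'
    · simp [Real.zero_rpow hs.ne']
    · have h2 : t ^ (1:ℝ) ≤ t ^ s := Real.rpow_le_rpow_of_exponent_ge ht0' ht1 h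
      rw [Real.rpow_one] at h2
      linarith

/-- For `0 < s` and `t ∈ [0,1]`, `min 1 s * (1 - t) ≤ 1 - t^s`. -/
lemma alg_bern_lower {s t : ℝ} (hs : 0 < s) (ht0 : 0 ≤ t) (ht1 : t ≤ 1) :
    min 1 s * (1 - t) ≤ 1 - t ^ s := by
  rcases le_total 1 s with h | h
  · rw [min_eq_left h]
    rcases eq_or_lt_of_le ht0 with rfl | ht0'
    · simp [Real.zero_rpow hs.ne']
    · have h2 : t ^ s ≤ t ^ (1:ℝ) := Real.rpow_le_rpow_of_exponent_ge ht0' ht1 h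
      rw [Real.rpow_one] at h2
      linarith
  · rw [min_eq_right h]
    have hb := rpow_one_add_le_one_add_mul_self (by linarith : (-1:ℝ) ≤ t - 1) hs.le h
    have e : 1 + (t - 1) = t := by ring
    rw [e] at hb
    nlinarith

lemma alg_diff_upper {s a b : ℝ} (hs : 0 < s) (hb : 0 ≤ b) (hab : b ≤ a) (ha : 0 < a) :
    a ^ s - b ^ s ≤ max 1 s * ((a - b) * a ^ (s - 1)) := by
  have ht0 : 0 ≤ b / a := div_nonneg hb ha.le
  have ht1 : b / a ≤ 1 := (div_le_one ha).mpr hab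
  have h := mul_le_mul_of_nonneg_left (alg_bern_upper hs ht0 ht1)
    (Real.rpow_nonneg ha.le s)
  have has : a ^ s ≠ 0 := (Real.rpow_pos_of_pos ha s).ne'
  have e1 : a ^ s * (1 - (b / a) ^ s) = a ^ s - b ^ s := by
    rw [Real.div_rpow hb ha.le]; field_simp
  have e2 : a ^ s * (max 1 s * (1 - b / a)) = max 1 s * ((a - b) * a ^ (s - 1)) := by
    rw [Real.rpow_sub_one ha.ne']; field_simp
  rw [e1, e2] at h
  exact h

lemma alg_diff_lower {s a b : ℝ} (hs : 0 < s) (hb : 0 ≤ b) (hab : b ≤ a) (ha : 0 < a) :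
    min 1 s * ((a - b) * a ^ (s - 1)) ≤ a ^ s - b ^ s := by
  have ht0 : 0 ≤ b / a := div_nonneg hb ha.le
  have ht1 : b / a ≤ 1 := (div_le_one ha).mpr hab
  have h := mul_le_mul_of_nonneg_left (alg_bern_lower hs ht0 ht1)
    (Real.rpow_nonneg ha.le s)
  have has : a ^ s ≠ 0 := (Real.rpow_pos_of_pos ha s).ne'
  have e1 : a ^ s * (1 - (b / a) ^ s) = a ^ s - b ^ s := by
    rw [Real.div_rpow hb ha.le]; field_simp
  have e2 : a ^ s * (min 1 s * (1 - b / a)) = min 1 s * ((a - b) * a ^ (s - 1)) := by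
    rw [Real.rpow_sub_one ha.ne']; field_simp
  rw [e1, e2] at h
  exact h

lemma alg_main_aux (p q : ℝ) (hp : p ∈ Set.Ioo (1 : ℝ) 2) (hq : 1 < q)
    (a b : ℝ) (hb : 0 ≤ b) (hab : b ≤ a) :
    |a ^ ((p + q - 2) / p) - b ^ ((p + q - 2) / p)| ^ p ≤
      (max 1 ((p + q - 2) / p)) ^ p / min 1 (q - 1) *
        (|a - b| ^ (p - 2) * (a - b) * (a ^ (q - 1) - b ^ (q - 1))) := by
  obtain ⟨hp1, hp2⟩ := hp
  have hp0 : (0:ℝ) < p := by linarith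
  set α : ℝ := (p + q - 2) / p with hαdef
  have hα : 0 < α := div_pos (by linarith) hp0
  set M : ℝ := max 1 α with hMdef
  have hM : 0 < M := lt_of_lt_of_le one_pos (le_max_left _ _)
  have hm : 0 < min 1 (q - 1) := lt_min one_pos (by linarith)
  set γ : ℝ := M ^ p / min 1 (q - 1) with hγdef
  have hγ : 0 < γ := div_pos (Real.rpow_pos_of_pos hM p) hm
  rcases eq_or_lt_of_le hab with rfl | hlt
  · simp [sub_self, Real.zero_rpow hp0.ne']
  have ha : 0 < a := lt_of_le_of_lt hb hlt
  have hD : 0 < a - b := by linarith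
  have hmono : b ^ α ≤ a ^ α := Real.rpow_le_rpow hb hlt.le hα.le
  have habs1 : |a - b| = a - b := abs_of_pos hD
  have habs2 : |a ^ α - b ^ α| = a ^ α - b ^ α := abs_of_nonneg (by linarith)
  have h1 : a ^ α - b ^ α ≤ M * ((a - b) * a ^ (α - 1)) := alg_diff_upper hα hb hlt.le ha
  have h2 : (a ^ α - b ^ α) ^ p ≤ (M * ((a - b) * a ^ (α - 1))) ^ p :=
    Real.rpow_le_rpow (by linarith) h1 hp0.le
  have eexp : (α - 1) * p = q - 2 := by
    rw [hαdef, sub_mul, div_mul_cancel₀ _ hp0.ne']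
    ring
  have e5 : (M * ((a - b) * a ^ (α - 1))) ^ p = M ^ p * ((a - b) ^ p * a ^ (q - 2)) := by
    rw [Real.mul_rpow hM.le (by positivity), Real.mul_rpow hD.le (Real.rpow_nonneg ha.le _),
      ← Real.rpow_mul ha.le, eexp]
  have h3' := alg_diff_lower (show (0:ℝ) < q - 1 by linarith) hb hlt.le ha
  have eq2 : q - 1 - 1 = q - 2 := by ring
  rw [eq2] at h3'
  have e3 : (a - b) ^ (p - 2) * (a - b) = (a - b) ^ (p - 1) := by
    rw [show p - 1 = (p - 2) + 1 by ring, Real.rpow_add_one hD.ne']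
  have e4 : (a - b) ^ (p - 1) * (a - b) = (a - b) ^ p := by
    rw [← Real.rpow_add_one hD.ne' (p - 1)]
    norm_num
  have hγm : γ * min 1 (q - 1) = M ^ p := div_mul_cancel₀ _ hm.ne'
  calc |a ^ α - b ^ α| ^ p = (a ^ α - b ^ α) ^ p := by rw [habs2]
    _ ≤ M ^ p * ((a - b) ^ p * a ^ (q - 2)) := by rw [← e5]; exact h2
    _ = γ * ((a - b) ^ (p - 1) * (min 1 (q - 1) * ((a - b) * a ^ (q - 2)))) := by
        rw [← hγm, ← e4]; ring
    _ ≤ γ * ((a - b) ^ (p - 1) * (a ^ (q - 1) - b ^ (q - 1))) := by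
        apply mul_le_mul_of_nonneg_left _ hγ.le
        exact mul_le_mul_of_nonneg_left h3' (Real.rpow_nonneg hD.le _)
    _ = γ * (|a - b| ^ (p - 2) * (a - b) * (a ^ (q - 1) - b ^ (q - 1))) := by
        rw [habs1, e3]

/-- Algebraic inequality (Lemma alg (i)). -/
theorem alg_inequality_one (p q : ℝ) (hp : p ∈ Set.Ioo (1 : ℝ) 2) (hq : 1 < q) :
    ∃ γ : ℝ, 0 < γ ∧ ∀ a b : ℝ, 0 ≤ a → 0 ≤ b →
      |a ^ ((p + q - 2) / p) - b ^ ((p + q - 2) / p)| ^ p ≤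
        γ * (|a - b| ^ (p - 2) * (a - b) * (a ^ (q - 1) - b ^ (q - 1))) := by
  obtain ⟨hp1, hp2⟩ := hp
  have hp0 : (0:ℝ) < p := by linarith
  have hα : 0 < (p + q - 2) / p := div_pos (by linarith) hp0
  have hM : (0:ℝ) < max 1 ((p + q - 2) / p) := lt_of_lt_of_le one_pos (le_max_left _ _)
  have hm : (0:ℝ) < min 1 (q - 1) := lt_min one_pos (by linarith)
  refine ⟨(max 1 ((p + q - 2) / p)) ^ p / min 1 (q - 1),
    div_pos (Real.rpow_pos_of_pos hM p) hm, fun a b ha hb => ?_⟩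
  rcases le_total b a with hab | hab
  · exact alg_main_aux p q ⟨hp1, hp2⟩ hq a b hb hab
  · have h := alg_main_aux p q ⟨hp1, hp2⟩ hq b a ha hab
    rw [abs_sub_comm (b ^ ((p + q - 2) / p)) (a ^ ((p + q - 2) / p)), abs_sub_comm b a] at h
    have e : (max 1 ((p + q - 2) / p)) ^ p / min 1 (q - 1) *
        (|a - b| ^ (p - 2) * (b - a) * (b ^ (q - 1) - a ^ (q - 1))) =
        (max 1 ((p + q - 2) / p)) ^ p / min 1 (q - 1) *
        (|a - b| ^ (p - 2) * (a - b) * (a ^ (q - 1) - b ^ (q - 1))) := by ring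
    rw [e] at h
    exact h
end

section
/- For every $p \in (1,2)$ and every $q \ge 2$ there exists a constant $\gamma > 0$ (depending only on $p$ and $q$) such that for all $a, b \ge 0$: $(a+b)^{q-2} |a-b|^p \le \gamma \, \big| a^{(p+q-2)/p} - b^{(p+q-2)/p} \big|^p$. -/
private lemma alg_key (p q : ℝ) (hp1 : 1 < p) (hq : 2 ≤ q) (a b : ℝ)
    (hb : 0 ≤ b) (hab : b ≤ a) :
    (a + b) ^ (q - 2) * |a - b| ^ p ≤
      (2:ℝ) ^ (q - 2) * |a ^ ((p + q - 2) / p) - b ^ ((p + q - 2) / p)| ^ p := by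
  have hp0 : (0:ℝ) < p := lt_trans one_pos hp1
  set α : ℝ := (p + q - 2) / p with hαdef
  have ha : 0 ≤ a := hb.trans hab
  have hα1 : 1 ≤ α := by
    rw [hαdef, le_div_iff₀ hp0]; linarith
  have hα0 : 0 ≤ α := le_trans zero_le_one hα1
  have hαm1 : 0 ≤ α - 1 := by linarith
  rcases eq_or_lt_of_le ha with h0 | hapos
  · -- a = 0, hence b = 0
    have hb0 : b = 0 := le_antisymm (hab.trans_eq h0.symm) hb
    rw [← h0, hb0]
    simp [Real.zero_rpow hp0.ne']
  · -- main case: 0 < a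
    have hmono : b ^ α ≤ a ^ α := Real.rpow_le_rpow hb hab hα0
    have habs1 : |a - b| = a - b := abs_of_nonneg (by linarith)
    have habs2 : |a ^ α - b ^ α| = a ^ α - b ^ α := abs_of_nonneg (by linarith)
    rw [habs1, habs2]
    -- key: ((a+b)/2)^(α-1) * (a-b) ≤ a^α - b^α
    have hkey : ((a + b) / 2) ^ (α - 1) * (a - b) ≤ a ^ α - b ^ α := by
      have h1 : a ^ (α - 1) * (a - b) ≤ a ^ α - b ^ α := by
        have hrw : a ^ (α - 1) * a = a ^ α := by
          rw [← Real.rpow_add_one hapos.ne' (α - 1)]; ring_nf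
        have hbb : b ^ α ≤ a ^ (α - 1) * b := by
          rcases eq_or_lt_of_le hb with hb0 | hbpos
          · rw [← hb0, Real.zero_rpow (by linarith : α ≠ 0), mul_zero]
          · have : b ^ α = b ^ (α - 1) * b := by
              rw [← Real.rpow_add_one hbpos.ne' (α - 1)]; ring_nf
            rw [this]
            exact mul_le_mul_of_nonneg_right
              (Real.rpow_le_rpow hb hab hαm1) hb
        nlinarith [hrw, hbb]
      have h2 : ((a + b) / 2) ^ (α - 1) ≤ a ^ (α - 1) :=
        Real.rpow_le_rpow (by linarith) (by linarith) hαm1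
      calc ((a + b) / 2) ^ (α - 1) * (a - b) ≤ a ^ (α - 1) * (a - b) :=
            mul_le_mul_of_nonneg_right h2 (by linarith)
        _ ≤ a ^ α - b ^ α := h1
    have hL0 : 0 ≤ ((a + b) / 2) ^ (α - 1) * (a - b) := by
      apply mul_nonneg (Real.rpow_nonneg (by linarith) _) (by linarith)
    have hpow : (((a + b) / 2) ^ (α - 1) * (a - b)) ^ p ≤ (a ^ α - b ^ α) ^ p :=
      Real.rpow_le_rpow hL0 hkey hp0.le
    have hexpand : (((a + b) / 2) ^ (α - 1) * (a - b)) ^ p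
        = (a + b) ^ (q - 2) / 2 ^ (q - 2) * (a - b) ^ p := by
      have he : (α - 1) * p = q - 2 := by
        rw [hαdef]; field_simp; ring
      rw [Real.mul_rpow (Real.rpow_nonneg (by linarith) _) (by linarith),
        ← Real.rpow_mul (by linarith : (0:ℝ) ≤ (a+b)/2), he,
        Real.div_rpow (by linarith : (0:ℝ) ≤ a + b) (by norm_num : (0:ℝ) ≤ 2)]
    have h2pos : (0:ℝ) < (2:ℝ) ^ (q - 2) := by positivity
    rw [hexpand] at hpow
    rw [div_mul_eq_mul_div, div_le_iff₀ h2pos] at hpow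
    nlinarith [hpow]

/-- Algebraic inequality (Lemma alg (ii)). -/
theorem alg_inequality_two (p q : ℝ) (hp : p ∈ Set.Ioo (1 : ℝ) 2) (hq : 2 ≤ q) :
    ∃ γ : ℝ, 0 < γ ∧ ∀ a b : ℝ, 0 ≤ a → 0 ≤ b →
      (a + b) ^ (q - 2) * |a - b| ^ p ≤
        γ * |a ^ ((p + q - 2) / p) - b ^ ((p + q - 2) / p)| ^ p := by
  refine ⟨(2:ℝ) ^ (q - 2), by positivity, fun a b ha hb => ?_⟩
  rcases le_total b a with hab | hab
  · exact alg_key p q hp.1 hq a b hb hab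
  · rw [abs_sub_comm a b, add_comm a b,
      abs_sub_comm (a ^ ((p + q - 2) / p)) (b ^ ((p + q - 2) / p))]
    exact alg_key p q hp.1 hq b a ha hab
end

section
/- For every $p \in (1,2)$ there exists $\gamma > 0$ such that for all real numbers $a \ge b \ge 0$ and all $\varepsilon \in (0,1)$: $a^p - b^p \le \varepsilon a^p + \frac{\gamma}{\varepsilon^{p-1}} (a-b)^p$. -/
/-- Inequality (liao): `a^p - b^p ≤ ε a^p + γ ε^{1-p} (a-b)^p`. -/
theorem liao_inequality (p : ℝ) (hp : p ∈ Set.Ioo (1 : ℝ) 2) :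
    ∃ γ : ℝ, 0 < γ ∧ ∀ a b ε : ℝ, 0 ≤ b → b ≤ a → ε ∈ Set.Ioo (0 : ℝ) 1 →
      a ^ p - b ^ p ≤ ε * a ^ p + γ / ε ^ (p - 1) * (a - b) ^ p := by
  obtain ⟨hp1, hp2⟩ := hp
  have hp0 : (0:ℝ) < p := by linarith
  refine ⟨4, by norm_num, ?_⟩
  intro a b ε hb hba hε
  obtain ⟨hε0, hε1⟩ := hε
  rcases eq_or_lt_of_le (hb.trans hba) with ha | ha
  · -- a = 0 hence b = 0
    have hb0 : b = 0 := le_antisymm (ha ▸ hba) hb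
    rw [← ha, hb0]
    simp [Real.zero_rpow hp0.ne']
  · -- key tangent line inequality
    have key : a ^ p - b ^ p ≤ p * a ^ (p - 1) * (a - b) := by
      have hs : -1 ≤ b / a - 1 := by
        have : 0 ≤ b / a := by positivity
        linarith
      have hber := one_add_mul_self_le_rpow_one_add hs hp1.le
      rw [add_sub_cancel] at hber
      -- hber : 1 + p * (b/a - 1) ≤ (b/a)^p
      have hdiv : (b / a) ^ p = b ^ p / a ^ p := Real.div_rpow hb ha.le p
      rw [hdiv] at hber
      have hap : 0 < a ^ p := Real.rpow_pos_of_pos ha _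
      have h2 := mul_le_mul_of_nonneg_right hber hap.le
      rw [div_mul_cancel₀ _ hap.ne'] at h2
      -- h2 : (1 + p * (b/a - 1)) * a^p ≤ b^p
      have hrw : a ^ (p - 1) * a = a ^ p := by
        rw [← Real.rpow_add_one ha.ne', sub_add_cancel]
      have hba' : p * (b / a) * a ^ p = p * b * a ^ (p - 1) := by
        rw [← hrw]
        field_simp
      nlinarith [Real.rpow_pos_of_pos ha (p - 1), mul_pos ha (Real.rpow_pos_of_pos ha (p-1))]
    rcases le_or_gt (a - b) (ε / p * a) with hcase | hcase
    · -- small gap case: p * a^(p-1) * (a-b) ≤ ε * a^p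
      have hap1 : 0 < a ^ (p - 1) := Real.rpow_pos_of_pos ha _
      have h1 : p * a ^ (p - 1) * (a - b) ≤ p * a ^ (p - 1) * (ε / p * a) := by
        apply mul_le_mul_of_nonneg_left hcase (by positivity)
      have hrw : p * a ^ (p - 1) * (ε / p * a) = ε * a ^ p := by
        have h' : a ^ (p - 1) * a = a ^ p := by
          rw [← Real.rpow_add_one ha.ne', sub_add_cancel]
        rw [← h']
        field_simp
      have hnn : 0 ≤ 4 / ε ^ (p - 1) * (a - b) ^ p := by
        have : (0:ℝ) ≤ a - b := by linarith
        positivity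
      nlinarith [key]
    · -- large gap case
      have hab : 0 < a - b := lt_trans (by positivity) hcase
      have h1 : a ≤ p / ε * (a - b) := by
        rw [div_mul_eq_mul_div, le_div_iff₀ hε0]
        calc a * ε = p * (ε / p * a) := by field_simp
        _ ≤ p * (a - b) := by nlinarith
      have h2 : a ^ (p - 1) ≤ (p / ε * (a - b)) ^ (p - 1) :=
        Real.rpow_le_rpow ha.le h1 (by linarith)
      have h3 : (p / ε * (a - b)) ^ (p - 1)
          = p ^ (p - 1) / ε ^ (p - 1) * (a - b) ^ (p - 1) := by
        rw [Real.mul_rpow (by positivity) hab.le, Real.div_rpow hp0.le hε0.le]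
      have hppow : p * p ^ (p - 1) ≤ 4 := by
        have e1 : p * p ^ (p - 1) = p ^ p := by
          nth_rewrite 1 [← Real.rpow_one p]
          rw [← Real.rpow_add hp0, add_sub_cancel]
        have e2 : p ^ p ≤ 2 ^ p := Real.rpow_le_rpow hp0.le hp2.le hp0.le
        have e3 : (2:ℝ) ^ p ≤ 2 ^ (2:ℝ) :=
          Real.rpow_le_rpow_left_iff (by norm_num) |>.mpr hp2.le
        have e4 : (2:ℝ) ^ (2:ℝ) = 4 := by
          rw [show (2:ℝ) = ((2:ℕ):ℝ) by norm_num, Real.rpow_natCast]; norm_num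
        linarith
      have habp : (a - b) ^ (p - 1) * (a - b) = (a - b) ^ p := by
        rw [← Real.rpow_add_one hab.ne', sub_add_cancel]
      have hfin : p * a ^ (p - 1) * (a - b) ≤ 4 / ε ^ (p - 1) * (a - b) ^ p := by
        calc p * a ^ (p - 1) * (a - b)
            ≤ p * (p ^ (p - 1) / ε ^ (p - 1) * (a - b) ^ (p - 1)) * (a - b) := by
              apply mul_le_mul_of_nonneg_right _ hab.le
              apply mul_le_mul_of_nonneg_left _ hp0.le
              rw [← h3]; exact h2
          _ = p * p ^ (p - 1) / ε ^ (p - 1) * ((a - b) ^ (p - 1) * (a - b)) := by ring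
          _ ≤ 4 / ε ^ (p - 1) * ((a - b) ^ (p - 1) * (a - b)) := by
              have hX : (0:ℝ) ≤ (a - b) ^ (p - 1) * (a - b) := by positivity
              apply mul_le_mul_of_nonneg_right _ hX
              gcongr
          _ = 4 / ε ^ (p - 1) * (a - b) ^ p := by rw [habp]
      have hεap : 0 ≤ ε * a ^ p := by positivity
      linarith [key]
end
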